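/- arXiv:2308.07520 — 2 statements merged into one kernel-verified Lean document; each statement's English description precedes it below -/
import Mathlib

section
/- Let (Ω, P) be a probability space and let L_Y : Ω → ℝ^{l_Y}, L_Z : Ω → ℝ^{l_Z}, E_Y : Ω → ℝ^m, E_Z : Ω → ℝ^p be square-integrable random vectors with E[E_Y] = 0, and let A be a real m × l_Y matrix and B a real p × l_Z matrix. Define Y = A·L_Y + E_Y and Z = B·L_Z + E_Z. Assume: (1) m > l_Y and A has full column rank l_Y; (2) E_Y is independent of the pair (L_Z, E_Z) (hence of L_Z, of E_Z, and of Z); (3) the l_Y × p cross-moment matrix E[L_Y Zᵀ] = (E[(L_Y)_i Z_j]) has rank l_Y. Then there exists a nonzero ω ∈ ℝ^m with ωᵀ E[Y Zᵀ] = 0, and moreover for every nonzero ω ∈ ℝ^m with ωᵀ E[Y Zᵀ] = 0, the real random variable ωᵀY is independent of the random vector Z; i.e., (Z, Y) satisfies the GIN condition. -/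
open MeasureTheory ProbabilityTheory Matrix

lemma aux_int_mul {Ω : Type*} [MeasurableSpace Ω] {P : Measure Ω} {f g : Ω → ℝ}
    (hf : MemLp f 2 P) (hg : MemLp g 2 P) : Integrable (fun ω => f ω * g ω) P := by
  rw [← memLp_one_iff_integrable]
  haveI : ENNReal.HolderTriple 2 2 1 := ⟨by rw [ENNReal.inv_two_add_inv_two]; simp⟩
  exact MemLp.smul (p := 2) (q := 2) (r := 1) hg hf

lemma aux_ker {m lY : ℕ} (h1 : lY < m) (A : Matrix (Fin m) (Fin lY) ℝ) (hArank : A.rank = lY) :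
    ∃ w : Fin m → ℝ, w ≠ 0 ∧ w ᵥ* A = 0 := by
  have hrk : Aᵀ.rank = lY := by rw [Matrix.rank_transpose]; exact hArank
  have hker : LinearMap.ker Aᵀ.mulVecLin ≠ ⊥ := by
    intro h
    have := LinearMap.finrank_range_add_finrank_ker Aᵀ.mulVecLin
    rw [h, finrank_bot] at this
    have : Aᵀ.rank = m := by
      simpa [Matrix.rank, Module.finrank_fintype_fun_eq_card] using this
    omega
  obtain ⟨w, hw, hw0⟩ := Submodule.exists_mem_ne_zero_of_ne_bot hker
  exact ⟨w, hw0, by rw [← Matrix.mulVec_transpose]; exact hw⟩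

lemma aux_inj {lY p : ℕ} (C : Matrix (Fin lY) (Fin p) ℝ) (hC : C.rank = lY)
    (v : Fin lY → ℝ) (hv : v ᵥ* C = 0) : v = 0 := by
  have hrk : Cᵀ.rank = lY := by rw [Matrix.rank_transpose]; exact hC
  have hker : LinearMap.ker Cᵀ.mulVecLin = ⊥ := by
    have := LinearMap.finrank_range_add_finrank_ker Cᵀ.mulVecLin
    have hrange : Module.finrank ℝ (LinearMap.range Cᵀ.mulVecLin) = lY := hrk
    have hdom : Module.finrank ℝ (Fin lY → ℝ) = lY := by
      simp [Module.finrank_fintype_fun_eq_card]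
    rw [hrange, hdom] at this
    exact Submodule.finrank_eq_zero.mp (by omega)
  have : v ∈ LinearMap.ker Cᵀ.mulVecLin := by
    simp only [LinearMap.mem_ker, Matrix.mulVecLin_apply]
    rw [Matrix.mulVec_transpose]; exact hv
  rw [hker] at this
  simpa using this

/-- **GIN condition with distinct latent vectors.** Let `Y = A·L_Y + E_Y` and
`Z = B·L_Z + E_Z` with `E[E_Y] = 0`, all coordinates square-integrable. If (1) `m > l_Y` and
`A` has full column rank `l_Y`; (2) `E_Y` is independent of the pair `(L_Z, E_Z)`; and
(3) the cross-moment matrix `E[L_Y Zᵀ]` has rank `l_Y`; then there is a nonzero `w` with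
`wᵀ E[Y Zᵀ] = 0`, and for every nonzero `w` with `wᵀ E[Y Zᵀ] = 0` the variable `wᵀY` is
independent of `Z` — i.e. `(Z, Y)` satisfies the GIN condition. -/
theorem stmt1 {Ω : Type*} [MeasurableSpace Ω] (P : Measure Ω) [IsProbabilityMeasure P]
    (lY lZ m p : ℕ)
    (LY : Ω → Fin lY → ℝ) (LZ : Ω → Fin lZ → ℝ)
    (EY : Ω → Fin m → ℝ) (EZ : Ω → Fin p → ℝ)
    (hLYmeas : Measurable LY) (hLZmeas : Measurable LZ)
    (hEYmeas : Measurable EY) (hEZmeas : Measurable EZ)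
    (hLYL2 : ∀ i, MemLp (fun ω => LY ω i) 2 P)
    (hLZL2 : ∀ i, MemLp (fun ω => LZ ω i) 2 P)
    (hEYL2 : ∀ i, MemLp (fun ω => EY ω i) 2 P)
    (hEZL2 : ∀ i, MemLp (fun ω => EZ ω i) 2 P)
    (hEYmean : ∀ i, (∫ ω, EY ω i ∂P) = 0)
    (A : Matrix (Fin m) (Fin lY) ℝ) (B : Matrix (Fin p) (Fin lZ) ℝ)
    (Y : Ω → Fin m → ℝ) (Z : Ω → Fin p → ℝ)
    (hY : ∀ ω, Y ω = A.mulVec (LY ω) + EY ω)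
    (hZ : ∀ ω, Z ω = B.mulVec (LZ ω) + EZ ω)
    (h1 : lY < m) (hArank : A.rank = lY)
    (h2 : IndepFun EY (fun ω => (LZ ω, EZ ω)) P)
    (h3 : (Matrix.of fun i j => ∫ ω, LY ω i * Z ω j ∂P : Matrix (Fin lY) (Fin p) ℝ).rank
      = lY) :
    (∃ w : Fin m → ℝ, w ≠ 0 ∧
        w ᵥ* (Matrix.of fun i j => ∫ ω, Y ω i * Z ω j ∂P : Matrix (Fin m) (Fin p) ℝ) = 0) ∧
      ∀ w : Fin m → ℝ, w ≠ 0 →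
        w ᵥ* (Matrix.of fun i j => ∫ ω, Y ω i * Z ω j ∂P : Matrix (Fin m) (Fin p) ℝ) = 0 →
        IndepFun (fun ω => ∑ i, w i * Y ω i) Z P := by
  classical
  set C : Matrix (Fin lY) (Fin p) ℝ := Matrix.of fun i j => ∫ ω, LY ω i * Z ω j ∂P with hCdef
  set M : Matrix (Fin m) (Fin p) ℝ := Matrix.of fun i j => ∫ ω, Y ω i * Z ω j ∂P with hMdef
  -- L² of Z coordinates
  have hZL2 : ∀ j, MemLp (fun ω => Z ω j) 2 P := by
    intro j
    have hrw : (fun ω => Z ω j) = fun ω => (∑ k, B j k * LZ ω k) + EZ ω j := by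
      funext ω; rw [hZ ω]; simp [Matrix.mulVec, dotProduct]
    rw [hrw]
    exact (memLp_finset_sum Finset.univ fun k _ => (hLZL2 k).const_mul _).add (hEZL2 j)
  -- independence of EY and Z
  have hg : Measurable fun q : (Fin lZ → ℝ) × (Fin p → ℝ) => B.mulVec q.1 + q.2 := by
    apply Measurable.add ?_ measurable_snd
    apply measurable_pi_lambda
    intro j
    simp only [Matrix.mulVec, dotProduct]
    exact Finset.measurable_sum _ fun k _ =>
      (measurable_const.mul ((measurable_pi_apply k).comp measurable_fst))
  have hEYZ : IndepFun EY Z P := by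
    have h := h2.comp measurable_id hg
    have : Z = (fun q : (Fin lZ → ℝ) × (Fin p → ℝ) => B.mulVec q.1 + q.2) ∘
        (fun ω => (LZ ω, EZ ω)) := by
      funext ω; exact hZ ω
    rw [this]; exact h
  have hiZ : ∀ i j, IndepFun (fun ω => EY ω i) (fun ω => Z ω j) P := fun i j =>
    hEYZ.comp (measurable_pi_apply i) (measurable_pi_apply j)
  have hEYZ0 : ∀ i j, ∫ ω, EY ω i * Z ω j ∂P = 0 := by
    intro i j
    have := (hiZ i j).integral_mul_eq_mul_integral (hEYL2 i).aestronglyMeasurable (hZL2 j).aestronglyMeasurable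
    calc ∫ ω, EY ω i * Z ω j ∂P = ∫ ω, ((fun ω => EY ω i) * fun ω => Z ω j) ω ∂P := rfl
      _ = (∫ ω, EY ω i ∂P) * ∫ ω, Z ω j ∂P := this
      _ = 0 := by rw [hEYmean i, zero_mul]
  -- matrix identity M = A * C
  have hM : M = A * C := by
    ext i j
    simp only [hMdef, hCdef, Matrix.mul_apply, Matrix.of_apply]
    have hrw : ∀ ω, Y ω i * Z ω j = (∑ k, A i k * (LY ω k * Z ω j)) + EY ω i * Z ω j := by
      intro ω
      rw [hY ω]
      simp [Matrix.mulVec, dotProduct, add_mul, Finset.sum_mul, mul_assoc]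
    simp_rw [hrw]
    rw [integral_add (integrable_finset_sum _ fun k _ =>
        (aux_int_mul (hLYL2 k) (hZL2 j)).const_mul _) (aux_int_mul (hEYL2 i) (hZL2 j)),
      hEYZ0 i j, add_zero, integral_finset_sum _ fun k _ =>
        (aux_int_mul (hLYL2 k) (hZL2 j)).const_mul _]
    simp_rw [integral_const_mul]
  constructor
  · obtain ⟨w, hw0, hwA⟩ := aux_ker h1 A hArank
    refine ⟨w, hw0, ?_⟩
    show w ᵥ* M = 0
    rw [hM, ← Matrix.vecMul_vecMul, hwA, Matrix.zero_vecMul]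
  · intro w hw0 hwM
    have hwA : w ᵥ* A = 0 := by
      apply aux_inj C h3
      rw [Matrix.vecMul_vecMul, ← hM]
      exact hwM
    have hwY : (fun ω => ∑ i, w i * Y ω i) = (fun e : Fin m → ℝ => ∑ i, w i * e i) ∘ EY := by
      funext ω
      rw [hY ω]
      simp only [Pi.add_apply, mul_add, Finset.sum_add_distrib]
      have h0 : ∑ i, w i * (A *ᵥ LY ω) i = 0 := by
        have hd : w ⬝ᵥ (A *ᵥ LY ω) = (w ᵥ* A) ⬝ᵥ LY ω := Matrix.dotProduct_mulVec _ _ _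
        simpa [dotProduct, hwA] using hd
      rw [h0, zero_add]
      rfl
    rw [hwY]
    exact hEYZ.comp (Finset.measurable_sum _ fun i _ =>
      (measurable_pi_apply i).const_mul _) measurable_id
end

section
/- Let σ > 0 and μ_1, μ_2 ∈ ℝ, and for μ ∈ ℝ let f_{μ,σ} : ℝ → ℝ denote the Gaussian density f_{μ,σ}(x) = (σ√(2π))^{-1} · exp(−(x−μ)²/(2σ²)). Let Φ denote the standard normal cumulative distribution function, Φ(t) = ∫_{−∞}^{t} (2π)^{-1/2} e^{−s²/2} ds. Then ∫_ℝ |f_{μ_1,σ}(x) − f_{μ_2,σ}(x)| dx = 2·(2·Φ(|μ_1 − μ_2|/(2σ)) − 1). -/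
open MeasureTheory Real Set

/-- The density of the Gaussian distribution `N(μ, σ²)`. -/
noncomputable def gaussDensity (μ σ : ℝ) (x : ℝ) : ℝ :=
  (σ * Real.sqrt (2 * Real.pi))⁻¹ * Real.exp (-(x - μ) ^ 2 / (2 * σ ^ 2))

/-- The standard normal cumulative distribution function `Φ`. -/
noncomputable def stdNormalCDF (t : ℝ) : ℝ :=
  ∫ s in Set.Iic t, (Real.sqrt (2 * Real.pi))⁻¹ * Real.exp (-s ^ 2 / 2)


noncomputable def stdφ : ℝ → ℝ := fun s => (Real.sqrt (2 * Real.pi))⁻¹ * Real.exp (-s ^ 2 / 2)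

lemma integrable_stdφ : Integrable stdφ := by
  have h : Integrable (fun s : ℝ => Real.exp (-(1/2 : ℝ) * s ^ 2)) :=
    integrable_exp_neg_mul_sq (by norm_num)
  have : stdφ = fun s => (Real.sqrt (2 * Real.pi))⁻¹ * Real.exp (-(1/2 : ℝ) * s ^ 2) := by
    funext s; unfold stdφ; ring_nf
  rw [this]
  exact h.const_mul _

lemma integral_stdφ : ∫ s, stdφ s = 1 := by
  have h : (fun s : ℝ => stdφ s) = fun s => (Real.sqrt (2 * Real.pi))⁻¹ * Real.exp (-(1/2 : ℝ) * s ^ 2) := by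
    funext s; unfold stdφ; ring_nf
  rw [h, integral_const_mul, integral_gaussian]
  rw [show Real.pi / (1/2 : ℝ) = 2 * Real.pi by ring]
  rw [inv_mul_cancel₀ (by positivity : Real.sqrt (2 * Real.pi) ≠ 0)]

lemma stdNormalCDF_neg (t : ℝ) : stdNormalCDF (-t) = 1 - stdNormalCDF t := by
  have h1 : stdNormalCDF (-t) = ∫ s in Set.Ioi t, stdφ s := by
    rw [show (∫ s in Set.Ioi t, stdφ s) = ∫ s in Set.Ioi t, stdφ (-s) from
      setIntegral_congr_fun measurableSet_Ioi (by intro s _; simp only [stdφ, neg_sq])]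
    rw [integral_comp_neg_Ioi]
    rfl
  have h2 : stdNormalCDF t + (∫ s in Set.Ioi t, stdφ s) = 1 := by
    rw [show stdNormalCDF t = ∫ s in Set.Iic t, stdφ s from rfl]
    rw [intervalIntegral.integral_Iic_add_Ioi integrable_stdφ.integrableOn integrable_stdφ.integrableOn,
      integral_stdφ]
  linarith [h1, h2]

lemma gaussDensity_eq (μ σ : ℝ) (hσ : 0 < σ) :
    gaussDensity μ σ = ProbabilityTheory.gaussianPDFReal μ (⟨σ ^ 2, sq_nonneg σ⟩ : NNReal) := by
  funext x
  unfold gaussDensity ProbabilityTheory.gaussianPDFReal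
  show _ = (√(2 * π * (σ ^ 2)))⁻¹ * rexp (-(x - μ) ^ 2 / (2 * σ ^ 2))
  congr 1
  rw [Real.sqrt_mul (by positivity : (0:ℝ) ≤ 2 * Real.pi) (σ ^ 2), Real.sqrt_sq hσ.le]
  ring

lemma integrable_gaussDensity (μ σ : ℝ) (hσ : 0 < σ) : Integrable (gaussDensity μ σ) := by
  rw [gaussDensity_eq μ σ hσ]
  exact ProbabilityTheory.integrable_gaussianPDFReal _ _

lemma integral_gaussDensity (μ σ : ℝ) (hσ : 0 < σ) : ∫ x, gaussDensity μ σ x = 1 := by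
  rw [gaussDensity_eq μ σ hσ]
  refine ProbabilityTheory.integral_gaussianPDFReal_eq_one μ (ne_of_gt ?_)
  apply NNReal.coe_pos.1; change (0:ℝ) < σ ^ 2
  positivity

lemma cdf_gauss (μ σ t : ℝ) (hσ : 0 < σ) :
    ∫ x in Set.Iic t, gaussDensity μ σ x = stdNormalCDF ((t - μ) / σ) := by
  set F : ℝ → ℝ := Set.indicator (Set.Iic t) (gaussDensity μ σ) with hF
  have h2 : ∀ y : ℝ, F (σ * y + μ)
      = σ⁻¹ * Set.indicator (Set.Iic ((t - μ) / σ)) stdφ y := by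
    intro y
    by_cases hy : y ≤ (t - μ) / σ
    · have hx : σ * y + μ ≤ t := by
        rw [le_div_iff₀ hσ] at hy; linarith [hy]
      rw [hF, Set.indicator_of_mem (Set.mem_Iic.mpr hx),
        Set.indicator_of_mem (Set.mem_Iic.mpr hy)]
      unfold gaussDensity stdφ
      have he : -(σ * y + μ - μ) ^ 2 / (2 * σ ^ 2) = -y ^ 2 / 2 := by
        field_simp; ring
      rw [he, mul_inv]
      ring
    · push_neg at hy
      have hyσ : t - μ < σ * y := by rw [div_lt_iff₀ hσ] at hy; linarith
      rw [hF, Set.indicator_of_notMem (by simp only [Set.mem_Iic, not_le]; linarith),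
        Set.indicator_of_notMem (by simp only [Set.mem_Iic, not_le]; exact hy), mul_zero]
  have h3 : (∫ y, F (σ * y + μ)) = |σ⁻¹| • ∫ x, F x := by
    calc (∫ y, F (σ * y + μ)) = ∫ y, (fun z => F (z + μ)) (σ * y) := by simp
    _ = |σ⁻¹| • ∫ z, F (z + μ) :=
      MeasureTheory.Measure.integral_comp_mul_left (fun z => F (z + μ)) σ
    _ = |σ⁻¹| • ∫ x, F x := by rw [integral_add_right_eq_self]
  have h4 : (∫ y, F (σ * y + μ)) = σ⁻¹ * stdNormalCDF ((t - μ) / σ) := by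
    simp_rw [h2]
    rw [integral_const_mul]
    congr 1
    rw [MeasureTheory.integral_indicator measurableSet_Iic]
    rfl
  rw [MeasureTheory.integral_indicator measurableSet_Iic] at h3
  rw [h4] at h3
  rw [abs_of_pos (by positivity), smul_eq_mul] at h3
  have := mul_left_cancel₀ (by positivity : σ⁻¹ ≠ (0:ℝ)) h3
  exact this.symm

lemma key (σ μ₁ μ₂ : ℝ) (hσ : 0 < σ) (h : μ₂ ≤ μ₁) :
    ∫ x, |gaussDensity μ₁ σ x - gaussDensity μ₂ σ x| =
      2 * (2 * stdNormalCDF ((μ₁ - μ₂) / (2 * σ)) - 1) := by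
  have hint1 := integrable_gaussDensity μ₁ σ hσ
  have hint2 := integrable_gaussDensity μ₂ σ hσ
  have habs : Integrable (fun x => |gaussDensity μ₁ σ x - gaussDensity μ₂ σ x|) :=
    (hint1.sub hint2).abs
  set m : ℝ := (μ₁ + μ₂) / 2 with hm
  set a : ℝ := (μ₁ - μ₂) / (2 * σ) with ha
  have hcomp1 : ∀ x, m ≤ x → gaussDensity μ₂ σ x ≤ gaussDensity μ₁ σ x := by
    intro x hx
    rw [hm] at hx
    unfold gaussDensity
    gcongr (σ * Real.sqrt (2 * Real.pi))⁻¹ * Real.exp (?_ / (2 * σ ^ 2))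
    nlinarith [mul_nonneg (sub_nonneg.2 h) (by linarith : (0:ℝ) ≤ 2 * x - μ₁ - μ₂)]
  have hcomp2 : ∀ x, x < m → gaussDensity μ₁ σ x ≤ gaussDensity μ₂ σ x := by
    intro x hx
    rw [hm] at hx
    unfold gaussDensity
    gcongr (σ * Real.sqrt (2 * Real.pi))⁻¹ * Real.exp (?_ / (2 * σ ^ 2))
    nlinarith [mul_nonneg (sub_nonneg.2 h) (by linarith : (0:ℝ) ≤ μ₁ + μ₂ - 2 * x)]
  have c1 : ∫ x in Set.Iio m, gaussDensity μ₁ σ x = stdNormalCDF (-a) := by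
    rw [← MeasureTheory.integral_Iic_eq_integral_Iio, cdf_gauss μ₁ σ m hσ]
    congr 1
    rw [hm, ha]
    field_simp
    ring
  have c2 : ∫ x in Set.Iio m, gaussDensity μ₂ σ x = stdNormalCDF a := by
    rw [← MeasureTheory.integral_Iic_eq_integral_Iio, cdf_gauss μ₂ σ m hσ]
    congr 1
    rw [hm, ha]
    field_simp
    ring
  have d1 : ∫ x in Set.Ici m, gaussDensity μ₁ σ x = 1 - stdNormalCDF (-a) := by
    have := intervalIntegral.integral_Iio_add_Ici (μ := volume) (b := m)
      hint1.integrableOn hint1.integrableOn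
    rw [integral_gaussDensity μ₁ σ hσ, c1] at this
    linarith
  have d2 : ∫ x in Set.Ici m, gaussDensity μ₂ σ x = 1 - stdNormalCDF a := by
    have := intervalIntegral.integral_Iio_add_Ici (μ := volume) (b := m)
      hint2.integrableOn hint2.integrableOn
    rw [integral_gaussDensity μ₂ σ hσ, c2] at this
    linarith
  have hIio : ∫ x in Set.Iio m, |gaussDensity μ₁ σ x - gaussDensity μ₂ σ x| =
      stdNormalCDF a - stdNormalCDF (-a) := by
    rw [show stdNormalCDF a - stdNormalCDF (-a)
        = (∫ x in Set.Iio m, gaussDensity μ₂ σ x) - ∫ x in Set.Iio m, gaussDensity μ₁ σ x by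
      rw [c1, c2]]
    rw [← MeasureTheory.integral_sub hint2.integrableOn hint1.integrableOn]
    apply setIntegral_congr_fun measurableSet_Iio
    intro x hx
    dsimp only
    rw [abs_sub_comm, abs_of_nonneg (sub_nonneg.2 (hcomp2 x hx))]
  have hIci : ∫ x in Set.Ici m, |gaussDensity μ₁ σ x - gaussDensity μ₂ σ x| =
      stdNormalCDF a - stdNormalCDF (-a) := by
    rw [show stdNormalCDF a - stdNormalCDF (-a)
        = (∫ x in Set.Ici m, gaussDensity μ₁ σ x) - ∫ x in Set.Ici m, gaussDensity μ₂ σ x by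
      rw [d1, d2]; ring]
    rw [← MeasureTheory.integral_sub hint1.integrableOn hint2.integrableOn]
    apply setIntegral_congr_fun measurableSet_Ici
    intro x hx
    dsimp only
    rw [abs_of_nonneg (sub_nonneg.2 (hcomp1 x hx))]
  have hsplit := intervalIntegral.integral_Iio_add_Ici (μ := volume) (b := m)
      habs.integrableOn habs.integrableOn
  rw [hIio, hIci] at hsplit
  rw [← hsplit, stdNormalCDF_neg a]
  ring

/-- The `L¹` distance between the densities of two Gaussians with equal
variance `σ² > 0` and means `μ₁, μ₂` equals `2(2Φ(|μ₁ − μ₂|/(2σ)) − 1)`. -/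
theorem stmt12 (σ μ₁ μ₂ : ℝ) (hσ : 0 < σ) :
    ∫ x, |gaussDensity μ₁ σ x - gaussDensity μ₂ σ x| =
      2 * (2 * stdNormalCDF (|μ₁ - μ₂| / (2 * σ)) - 1) := by
  rcases le_total μ₂ μ₁ with h | h
  · rw [abs_of_nonneg (sub_nonneg.2 h)]
    exact key σ μ₁ μ₂ hσ h
  · rw [abs_sub_comm μ₁ μ₂, abs_of_nonneg (sub_nonneg.2 h)]
    rw [show (fun x => |gaussDensity μ₁ σ x - gaussDensity μ₂ σ x|)
        = fun x => |gaussDensity μ₂ σ x - gaussDensity μ₁ σ x| by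
      funext x; rw [abs_sub_comm]]
    exact key σ μ₂ μ₁ hσ h
end
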